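/- Let Λ > 0 and let x : ℝ → ℝ be differentiable with ẋ(t) = −x(t)² + Λ/3 for all t, and suppose |x(0)| < √(Λ/3). Then x(t) → √(Λ/3) as t → +∞ and x(t) → −√(Λ/3) as t → −∞; i.e. the interval (−√(Λ/3), √(Λ/3)) lies in the stable manifold of the expanding de Sitter equilibrium √(Λ/3) and in the unstable manifold of the contracting de Sitter equilibrium −√(Λ/3). -/

import Mathlib

/-!
Write `a = √(Λ/3)`, so that `ẋ = (a - x)(a + x)`. Each of `a - x` and `a + x` then solves a
linear equation `u̇ = p u`, hence is its initial value times a positive exponential and keeps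
its sign: the solution never leaves `(-a, a)`. On that interval the ratio `(a + x)/(a - x)`
satisfies `ṙ = 2a r`, so `r = r₀ e^{2at}` and `x = a - 2a/(r + 1)`, which tends to `a` as
`r → ∞` and to `-a` as `r → 0`.
-/

open Filter Topology Real

theorem eq_mul_exp_integral_of_hasDerivAt {u p : ℝ → ℝ} (hp : Continuous p)
    (hu : ∀ t, HasDerivAt u (p t * u t) t) (t : ℝ) :
    u t = u 0 * exp (∫ s in (0)..t, p s) := by
  set P : ℝ → ℝ := fun t => ∫ s in (0)..t, p s
  have hP : ∀ t, HasDerivAt P (p t) t := fun t => (hp.integral_hasStrictDerivAt 0 t).hasDerivAt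
  have hconst : ∀ t, HasDerivAt (fun t => u t * exp (-P t)) 0 t := fun t =>
    ((hu t).mul (hP t).neg.exp).congr_deriv (by simp only [Pi.neg_apply]; ring)
  have h : u t * exp (-P t) = u 0 := by
    simpa [P] using is_const_of_deriv_eq_zero (fun t => (hconst t).differentiableAt)
      (fun t => (hconst t).deriv) t 0
  rw [← h, mul_assoc, ← exp_add, neg_add_cancel, exp_zero, mul_one]

theorem pos_of_hasDerivAt_mul {u p : ℝ → ℝ} (hp : Continuous p)
    (hu : ∀ t, HasDerivAt u (p t * u t) t) (h0 : 0 < u 0) (t : ℝ) : 0 < u t := by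
  rw [eq_mul_exp_integral_of_hasDerivAt hp hu t]
  positivity

section Riccati

variable {a : ℝ} {x : ℝ → ℝ}

theorem abs_lt_of_hasDerivAt_sq_sub_sq (hx : ∀ t, HasDerivAt x (a ^ 2 - x t ^ 2) t)
    (h0 : |x 0| < a) (t : ℝ) : |x t| < a := by
  have hxc : Continuous x := continuous_iff_continuousAt.2 fun t => (hx t).continuousAt
  rw [abs_lt] at h0 ⊢
  have hadd : 0 < a + x t :=
    pos_of_hasDerivAt_mul (u := fun t => a + x t) (p := fun t => a - x t) (by fun_prop)
      (fun t => ((hx t).const_add a).congr_deriv (by ring)) (by linarith) t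
  have hsub : 0 < a - x t :=
    pos_of_hasDerivAt_mul (u := fun t => a - x t) (p := fun t => -(a + x t)) (by fun_prop)
      (fun t => ((hx t).const_sub a).congr_deriv (by ring)) (by linarith) t
  constructor <;> linarith

theorem div_eq_mul_exp_of_hasDerivAt_sq_sub_sq (hx : ∀ t, HasDerivAt x (a ^ 2 - x t ^ 2) t)
    (h0 : |x 0| < a) (t : ℝ) :
    (a + x t) / (a - x t) = (a + x 0) / (a - x 0) * exp (2 * a * t) := by
  have hsub : ∀ t, a - x t ≠ 0 := fun t =>
    (sub_pos.2 (abs_lt.1 (abs_lt_of_hasDerivAt_sq_sub_sq hx h0 t)).2).ne'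
  have hr : ∀ t, HasDerivAt (fun t => (a + x t) / (a - x t))
      (2 * a * ((a + x t) / (a - x t))) t := fun t =>
    (((hx t).const_add a).div ((hx t).const_sub a) (hsub t)).congr_deriv (by
      have := hsub t
      field_simp
      ring)
  rw [eq_mul_exp_integral_of_hasDerivAt continuous_const hr t, intervalIntegral.integral_const,
    smul_eq_mul, sub_zero, mul_comm t]

theorem eq_sub_div_of_hasDerivAt_sq_sub_sq (hx : ∀ t, HasDerivAt x (a ^ 2 - x t ^ 2) t)
    (h0 : |x 0| < a) (t : ℝ) :
    x t = a - 2 * a / ((a + x 0) / (a - x 0) * exp (2 * a * t) + 1) := by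
  have hlt := abs_lt.1 (abs_lt_of_hasDerivAt_sq_sub_sq hx h0 t)
  have hsub : a - x t ≠ 0 := by linarith
  have hsum : (a + x t) / (a - x t) + 1 = 2 * a / (a - x t) := by
    rw [div_add_one hsub]
    ring
  rw [← div_eq_mul_exp_of_hasDerivAt_sq_sub_sq hx h0 t, hsum, div_div_cancel₀ (by linarith)]
  ring

end Riccati

theorem tendsto_sub_div_mul_exp_add_one_atTop {a c : ℝ} (ha : 0 < a) (hc : 0 < c) :
    Tendsto (fun t => a - 2 * a / (c * exp (2 * a * t) + 1)) atTop (𝓝 a) := by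
  have hr : Tendsto (fun t => c * exp (2 * a * t) + 1) atTop atTop :=
    tendsto_atTop_add_const_right _ 1 ((tendsto_exp_atTop.comp
      (tendsto_id.const_mul_atTop (by positivity))).const_mul_atTop hc)
  simpa using tendsto_const_nhds.sub (tendsto_const_nhds.div_atTop hr)

theorem tendsto_sub_div_mul_exp_add_one_atBot {a : ℝ} (ha : 0 < a) (c : ℝ) :
    Tendsto (fun t => a - 2 * a / (c * exp (2 * a * t) + 1)) atBot (𝓝 (-a)) := by
  have hr : Tendsto (fun t => c * exp (2 * a * t) + 1) atBot (𝓝 (c * 0 + 1)) :=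
    ((tendsto_exp_atBot.comp (tendsto_id.const_mul_atBot (by positivity))).const_mul c).add_const 1
  have := (hr.inv₀ (by norm_num)).const_mul (2 * a) |>.const_sub a
  convert this using 2 <;> ring

theorem de_sitter_attractor_general
    (Λ : ℝ)
    (x : ℝ → ℝ)
    (hx : ∀ t, HasDerivAt x (-(x t) ^ 2 + Λ/3) t)
    (h0 : |x 0| < Real.sqrt (Λ/3)) :
    Tendsto x atTop (nhds (Real.sqrt (Λ/3))) ∧
    Tendsto x atBot (nhds (-Real.sqrt (Λ/3))) := by
  set a := Real.sqrt (Λ / 3)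
  have ha : 0 < a := (abs_nonneg _).trans_lt h0
  have hx' : ∀ t, HasDerivAt x (a ^ 2 - x t ^ 2) t := fun t =>
    (hx t).congr_deriv (by rw [sq_sqrt (sqrt_pos.1 ha).le]; ring)
  have hc : 0 < (a + x 0) / (a - x 0) := by
    obtain ⟨hlow, hupp⟩ := abs_lt.1 h0
    exact div_pos (by linarith) (by linarith)
  rw [funext (eq_sub_div_of_hasDerivAt_sq_sub_sq hx' h0)]
  exact ⟨tendsto_sub_div_mul_exp_add_one_atTop ha hc, tendsto_sub_div_mul_exp_add_one_atBot ha _⟩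

/-- For `Λ > 0`, any solution of `ẋ = −x² + Λ/3` starting strictly between
the two de Sitter equilibria `±√(Λ/3)` tends to `√(Λ/3)` as `t → +∞` and
to `−√(Λ/3)` as `t → −∞`. -/
theorem de_sitter_attractor
    (Λ : ℝ) (hΛ : 0 < Λ)
    (x : ℝ → ℝ)
    (hx : ∀ t, HasDerivAt x (-(x t) ^ 2 + Λ/3) t)
    (h0 : |x 0| < Real.sqrt (Λ/3)) :
    Tendsto x atTop (nhds (Real.sqrt (Λ/3))) ∧
    Tendsto x atBot (nhds (-Real.sqrt (Λ/3))) :=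
  de_sitter_attractor_general Λ x hx h0
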